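/- arXiv:math/9812137 — 2 statements merged into one kernel-verified Lean document; each statement's English description precedes it below -/
import Mathlib

section
/- For each c ∈ ℝ, the function V_c(x) = c·exp(−1/(2x²)) for x > 0 solves the ODE V'(x)·x³ = V(x) on (0,∞). Consequently, every solution V on (0,∞) of V'(x)x³ = V(x) is bounded on (0,∞), and hence there is no class K∞ function V : [0,∞) → [0,∞) satisfying V'(x)·x³ = V(x) for all x > 0. -/
open Set Real

/-!
On `(0, ∞)` the equation `V' x³ = V` is the linear equation `V' = φ' V` with
`φ x = -1 / (2 x²)`, so every solution is `C · exp (φ x)`. Since `φ < 0` there, every solution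
is bounded by `|C|`, whereas a class K∞ function is unbounded and vanishes at `0`.
-/

theorem exists_eq_mul_exp_of_hasDerivAt_eq_mul {s : Set ℝ} (hs : IsOpen s)
    (hs' : IsPreconnected s) {f φ φ' : ℝ → ℝ} (hφ : ∀ x ∈ s, HasDerivAt φ (φ' x) x)
    (hf : ∀ x ∈ s, HasDerivAt f (φ' x * f x) x) :
    ∃ C : ℝ, ∀ x ∈ s, f x = C * exp (φ x) := by
  have hderiv : ∀ x ∈ s, HasDerivAt (fun y => f y * exp (-φ y)) 0 x := fun x hx =>
    ((hf x hx).mul (hφ x hx).neg.exp).congr_deriv (by ring)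
  obtain ⟨C, hC⟩ := hs.exists_is_const_of_deriv_eq_zero hs'
    (fun x hx => (hderiv x hx).differentiableAt.differentiableWithinAt)
    (fun x hx => (hderiv x hx).deriv)
  refine ⟨C, fun x hx => ?_⟩
  rw [← hC x hx, mul_assoc, ← exp_add, neg_add_cancel, exp_zero, mul_one]

theorem hasDerivAt_neg_one_div_two_mul_sq {x : ℝ} (hx : x ≠ 0) :
    HasDerivAt (fun x : ℝ => -1 / (2 * x ^ 2)) (1 / x ^ 3) x := by
  refine ((hasDerivAt_const x (-1 : ℝ)).div ((hasDerivAt_pow 2 x).const_mul 2)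
    (by positivity)).congr_deriv ?_
  field_simp
  ring

theorem hasDerivAt_mul_exp_neg_one_div_two_mul_sq (c : ℝ) {x : ℝ} (hx : x ≠ 0) :
    HasDerivAt (fun x : ℝ => c * exp (-1 / (2 * x ^ 2)))
      (c * exp (-1 / (2 * x ^ 2)) / x ^ 3) x :=
  ((hasDerivAt_neg_one_div_two_mul_sq hx).exp.const_mul c).congr_deriv (by ring)

theorem exists_eq_mul_exp_of_hasDerivAt_eq_div_pow_three {V : ℝ → ℝ}
    (hV : ∀ x > (0 : ℝ), HasDerivAt V (V x / x ^ 3) x) :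
    ∃ C : ℝ, ∀ x > (0 : ℝ), V x = C * exp (-1 / (2 * x ^ 2)) :=
  exists_eq_mul_exp_of_hasDerivAt_eq_mul isOpen_Ioi isPreconnected_Ioi
    (fun x hx => hasDerivAt_neg_one_div_two_mul_sq (ne_of_gt hx))
    (fun x hx => by simpa only [one_div_mul_eq_div] using hV x hx)

theorem exists_abs_le_of_hasDerivAt_eq_div_pow_three {V : ℝ → ℝ}
    (hV : ∀ x > (0 : ℝ), HasDerivAt V (V x / x ^ 3) x) :
    ∃ M : ℝ, ∀ x > (0 : ℝ), |V x| ≤ M := by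
  obtain ⟨C, hC⟩ := exists_eq_mul_exp_of_hasDerivAt_eq_div_pow_three hV
  refine ⟨|C|, fun x hx => ?_⟩
  have hexp : exp (-1 / (2 * x ^ 2)) ≤ 1 := exp_le_one_iff.2 <|
    div_nonpos_of_nonpos_of_nonneg (by norm_num) (by positivity)
  rw [hC x hx, abs_mul, abs_of_pos (exp_pos _)]
  exact mul_le_of_le_one_right (abs_nonneg C) hexp

/-- the functions `V_c(x) = c·exp(−1/(2x²))` solve `V'(x)x³ = V(x)`
on `(0,∞)`; every solution of this ODE on `(0,∞)` is bounded; hence no class K∞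
function satisfies it. -/
theorem no_Kinfty_solution_of_Vprime_x3_eq_V :
    (∀ c : ℝ, ∀ x > (0:ℝ),
      HasDerivAt (fun x : ℝ => c * Real.exp (-1 / (2 * x ^ 2)))
        ((c * Real.exp (-1 / (2 * x ^ 2))) / x ^ 3) x) ∧
    (∀ V : ℝ → ℝ, (∀ x > (0:ℝ), HasDerivAt V (V x / x ^ 3) x) →
      ∃ M : ℝ, ∀ x > (0:ℝ), |V x| ≤ M) ∧
    ¬ ∃ V : ℝ → ℝ,
      (V 0 = 0 ∧ ContinuousOn V (Ici 0) ∧ StrictMonoOn V (Ici 0) ∧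
        (∀ r ≥ (0:ℝ), 0 ≤ V r) ∧ (∀ M : ℝ, ∃ r ≥ (0:ℝ), V r > M)) ∧
      (∀ x > (0:ℝ), HasDerivAt V (V x / x ^ 3) x) := by
  refine ⟨fun c x hx => hasDerivAt_mul_exp_neg_one_div_two_mul_sq c (ne_of_gt hx),
    fun V => exists_abs_le_of_hasDerivAt_eq_div_pow_three, ?_⟩
  rintro ⟨V, ⟨hV0, -, -, -, hunbounded⟩, hV⟩
  obtain ⟨M, hM⟩ := exists_abs_le_of_hasDerivAt_eq_div_pow_three hV
  obtain ⟨r, hr, hVr⟩ := hunbounded (max M 0)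
  rcases hr.eq_or_lt with rfl | hr
  · rw [hV0] at hVr
    exact (le_max_right M 0).not_gt hVr
  · exact ((le_abs_self _).trans ((hM r hr).trans (le_max_left M 0))).not_gt hVr
end

section
/- Let V : ℝⁿ → ℝ be C¹, proper, positive definite, smooth on ℝⁿ∖{0} with ∇V(x) ≠ 0 for x ≠ 0. Consider the normalized gradient flow ẋ = ∇V(x)/‖∇V(x)‖², with solutions ψ(t,x). Then V(ψ(t,x)) = V(x) + t for all t in the maximal existence interval, and for each x ≠ 0 the solution ψ(·,x) is defined for all t ∈ (−V(x), ∞). -/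
open Set Metric Filter
open scoped RealInnerProductSpace Topology NNReal

variable {n : ℕ}


variable {n : ℕ}

/-- the normalized gradient field -/
noncomputable def NF (V : EuclideanSpace ℝ (Fin n) → ℝ) (y : EuclideanSpace ℝ (Fin n)) :
    EuclideanSpace ℝ (Fin n) :=
  (‖gradient V y‖ ^ 2)⁻¹ • gradient V y

lemma inner_gradient_eq (V : EuclideanSpace ℝ (Fin n) → ℝ) (x v : EuclideanSpace ℝ (Fin n)) :
    ⟪gradient V x, v⟫ = fderiv ℝ V x v := by
  rw [gradient]
  rw [← InnerProductSpace.toDual_apply_apply, LinearIsometryEquiv.apply_symm_apply]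

lemma contDiffAt_NF {V : EuclideanSpace ℝ (Fin n) → ℝ}
    (hVsmooth : ContDiffOn ℝ (⊤ : ℕ∞) V ({0}ᶜ : Set (EuclideanSpace ℝ (Fin n))))
    (hgrad : ∀ x ≠ (0 : EuclideanSpace ℝ (Fin n)), gradient V x ≠ 0)
    {y : EuclideanSpace ℝ (Fin n)} (hy : y ≠ 0) :
    ContDiffAt ℝ 2 (NF V) y := by
  have hU : ({0}ᶜ : Set (EuclideanSpace ℝ (Fin n))) ∈ 𝓝 y :=
    (isOpen_compl_singleton).mem_nhds hy
  have hVat : ContDiffAt ℝ (⊤ : ℕ∞) V y := hVsmooth.contDiffAt hU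
  have hfd : ContDiffAt ℝ 2 (fderiv ℝ V) y := by
    have := hVat.fderiv_right (m := 2) (WithTop.coe_le_coe.mpr le_top)
    exact this
  have hg : ContDiffAt ℝ 2 (gradient V) y := by
    have hL : ContDiff ℝ 2 ((InnerProductSpace.toDual ℝ (EuclideanSpace ℝ (Fin n))).symm :
        (EuclideanSpace ℝ (Fin n) →L[ℝ] ℝ) → EuclideanSpace ℝ (Fin n)) :=
      (InnerProductSpace.toDual ℝ (EuclideanSpace ℝ (Fin n))).symm.toContinuousLinearEquiv.contDiff
    exact hL.contDiffAt.comp y hfd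
  have hn : ContDiffAt ℝ 2 (fun x => ‖gradient V x‖ ^ 2) y := by
    have : ContDiffAt ℝ 2 (fun x => ⟪gradient V x, gradient V x⟫) y := hg.inner ℝ hg
    refine this.congr_of_eventuallyEq ?_
    filter_upwards with x
    rw [real_inner_self_eq_norm_sq]
  have hne : ‖gradient V y‖ ^ 2 ≠ 0 := by
    simpa using pow_ne_zero 2 (norm_ne_zero_iff.mpr (hgrad y hy))
  have goal : ContDiffAt ℝ 2 (fun z => (‖gradient V z‖ ^ 2)⁻¹ • gradient V z) y := (hn.inv hne).smul hg
  exact goal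

lemma hasDerivAt_V_comp {V : EuclideanSpace ℝ (Fin n) → ℝ} (hV1 : ContDiff ℝ 1 V)
    (hgrad : ∀ x ≠ (0 : EuclideanSpace ℝ (Fin n)), gradient V x ≠ 0)
    {ψ : ℝ → EuclideanSpace ℝ (Fin n)} {t : ℝ} (hne : ψ t ≠ 0)
    (hd : HasDerivAt ψ (NF V (ψ t)) t) :
    HasDerivAt (fun s => V (ψ s)) 1 t := by
  have hVd : HasFDerivAt V (fderiv ℝ V (ψ t)) (ψ t) :=
    (hV1.differentiable one_ne_zero (ψ t)).hasFDerivAt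
  have h := hVd.comp_hasDerivAt t hd
  have hval : fderiv ℝ V (ψ t) (NF V (ψ t)) = 1 := by
    rw [← inner_gradient_eq, NF, real_inner_smul_right, real_inner_self_eq_norm_sq]
    have hne' : ‖gradient V (ψ t)‖ ^ 2 ≠ 0 := by
      simpa using pow_ne_zero 2 (norm_ne_zero_iff.mpr (hgrad _ hne))
    exact inv_mul_cancel₀ hne'
  rwa [hval] at h

/-- the value lemma: `V (ψ t) = V (ψ 0) + t` -/
lemma value_lemma {V : EuclideanSpace ℝ (Fin n) → ℝ} (hV1 : ContDiff ℝ 1 V)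
    (hgrad : ∀ x ≠ (0 : EuclideanSpace ℝ (Fin n)), gradient V x ≠ 0)
    {ψ : ℝ → EuclideanSpace ℝ (Fin n)} {a b : ℝ} (ha : a < 0) (hb : 0 < b)
    (hne : ∀ t ∈ Ioo a b, ψ t ≠ 0)
    (hd : ∀ t ∈ Ioo a b, HasDerivAt ψ (NF V (ψ t)) t) :
    ∀ t ∈ Ioo a b, V (ψ t) = V (ψ 0) + t := by
  have h0 : (0:ℝ) ∈ Ioo a b := ⟨ha, hb⟩
  set h : ℝ → ℝ := fun s => V (ψ s) - s with hh
  have hds : ∀ t ∈ Ioo a b, HasDerivAt h 0 t := by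
    intro t ht
    have := (hasDerivAt_V_comp hV1 hgrad (hne t ht) (hd t ht)).sub (hasDerivAt_id' t)
    rw [sub_self] at this
    exact this
  have hconst : ∀ t ∈ Ioo a b, h t = h 0 := by
    intro t ht
    have hdiff : DifferentiableOn ℝ h (Ioo a b) := fun s hs =>
      ((hds s hs).differentiableAt).differentiableWithinAt
    have hfz : ∀ s ∈ Ioo a b, fderivWithin ℝ h (Ioo a b) s = 0 := by
      intro s hs
      rw [fderivWithin_of_isOpen isOpen_Ioo hs]
      have := (hds s hs).hasFDerivAt
      rw [this.fderiv]
      ext u; simp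
    exact (convex_Ioo a b).is_const_of_fderivWithin_eq_zero hdiff hfz ht h0
  intro t ht
  have := hconst t ht
  simp only [hh] at this
  linarith

/-- uniqueness of nonvanishing solutions on an open interval -/
lemma uniq_lemma {V : EuclideanSpace ℝ (Fin n) → ℝ}
    (hVsmooth : ContDiffOn ℝ (⊤ : ℕ∞) V ({0}ᶜ : Set (EuclideanSpace ℝ (Fin n))))
    (hgrad : ∀ x ≠ (0 : EuclideanSpace ℝ (Fin n)), gradient V x ≠ 0)
    {f g : ℝ → EuclideanSpace ℝ (Fin n)} {a b t₀ : ℝ} (ht₀ : t₀ ∈ Ioo a b)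
    (hfne : ∀ t ∈ Ioo a b, f t ≠ 0)
    (hfd : ∀ t ∈ Ioo a b, HasDerivAt f (NF V (f t)) t)
    (hgne : ∀ t ∈ Ioo a b, g t ≠ 0)
    (hgd : ∀ t ∈ Ioo a b, HasDerivAt g (NF V (g t)) t)
    (heq : f t₀ = g t₀) : EqOn f g (Ioo a b) := by
  set S : Set ℝ := {t ∈ Ioo a b | f t = g t} with hS
  -- local uniqueness: at any point of S, f = g eventually
  have hloc : ∀ t ∈ S, f =ᶠ[𝓝 t] g := by
    rintro t ⟨htab, hfg⟩
    obtain ⟨K, s, hs, hlip⟩ :=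
      ((contDiffAt_NF hVsmooth hgrad (hfne t htab)).of_le one_le_two).exists_lipschitzOnWith
    have hIoo : Ioo a b ∈ 𝓝 t := isOpen_Ioo.mem_nhds htab
    have hfs : ∀ᶠ τ in 𝓝 t, f τ ∈ s :=
      (hfd t htab).continuousAt.preimage_mem_nhds hs
    have hgs : ∀ᶠ τ in 𝓝 t, g τ ∈ s := by
      have : ContinuousAt g t := (hgd t htab).continuousAt
      exact this.preimage_mem_nhds (by rwa [hfg] at hs)
    have hf' : ∀ᶠ τ in 𝓝 t, HasDerivAt f (NF V (f τ)) τ ∧ f τ ∈ s := by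
      filter_upwards [hIoo, hfs] with τ h1 h2 using ⟨hfd τ h1, h2⟩
    have hg' : ∀ᶠ τ in 𝓝 t, HasDerivAt g (NF V (g τ)) τ ∧ g τ ∈ s := by
      filter_upwards [hIoo, hgs] with τ h1 h2 using ⟨hgd τ h1, h2⟩
    exact ODE_solution_unique_of_eventually (v := fun _ y => NF V y) (s := fun _ => s)
      (Filter.Eventually.of_forall fun _ => hlip) hf' hg' hfg
  -- clopen argument on the preconnected set Ioo a b
  intro t htab
  by_contra hne
  -- consider the subtype
  have hpre : IsPreconnected (Ioo a b) := isPreconnected_Ioo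
  haveI : PreconnectedSpace (Ioo a b) := Subtype.preconnectedSpace hpre
  set A : Set (Ioo a b) := {x | f x = g x} with hA
  have hopen : IsOpen A := by
    rw [isOpen_iff_mem_nhds]
    rintro x hx
    have := hloc x ⟨x.2, hx⟩
    have h2 : Subtype.val ⁻¹' {τ | f τ = g τ} ∈ 𝓝 x :=
      continuous_subtype_val.continuousAt.preimage_mem_nhds
        (this.mono fun τ hτ => hτ : {τ | f τ = g τ} ∈ 𝓝 (x : ℝ))
    exact Filter.mem_of_superset h2 fun y hy => hy
  have hclosed : IsClosed A := by
    have hfc : Continuous fun x : Ioo a b => f x :=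
      continuous_iff_continuousAt.mpr fun x =>
        ((hfd x x.2).continuousAt).comp continuous_subtype_val.continuousAt
    have hgc : Continuous fun x : Ioo a b => g x :=
      continuous_iff_continuousAt.mpr fun x =>
        ((hgd x x.2).continuousAt).comp continuous_subtype_val.continuousAt
    exact isClosed_eq hfc hgc
  have huniv : A = univ := IsClopen.eq_univ ⟨hclosed, hopen⟩ ⟨⟨t₀, ht₀⟩, heq⟩
  have : (⟨t, htab⟩ : Ioo a b) ∈ A := huniv ▸ mem_univ _
  exact hne this

/-- Picard–Lindelöf with the extra information that the solution stays in the closed ball. -/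
theorem my_pl_exists {E : Type*} [NormedAddCommGroup E] [NormedSpace ℝ E] [CompleteSpace E]
    {v : ℝ → E → E} {tMin tMax : ℝ} {t₀ : Icc tMin tMax} (x₀ : E) {a L K : ℝ≥0}
    (hpl : IsPicardLindelof v t₀ x₀ a 0 L K) :
    ∃ f : ℝ → E, f t₀ = x₀ ∧ ∀ t ∈ Icc tMin tMax,
      f t ∈ closedBall x₀ a ∧ HasDerivWithinAt f (v t (f t)) (Icc tMin tMax) t := by
  obtain ⟨α, hα⟩ := ODE.FunSpace.exists_isFixedPt_next hpl (mem_closedBall_self le_rfl)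
  refine ⟨α.compProj, by rw [ODE.FunSpace.compProj_val, ← hα, ODE.FunSpace.next_apply₀],
    fun t ht ↦ ⟨α.compProj_mem_closedBall hpl.mul_max_le, ?_⟩⟩
  apply ODE.hasDerivWithinAt_picard_Icc t₀.2 hpl.continuousOn_uncurry
    α.continuous_compProj.continuousOn (fun _ ht' ↦ α.compProj_mem_closedBall hpl.mul_max_le)
    x₀ ht |>.congr_of_mem _ ht
  intro t' ht'
  nth_rw 1 [← hα]
  rw [ODE.FunSpace.compProj_of_mem ht', ODE.FunSpace.next_apply]

/-- uniform local solvability near a compact set avoiding the origin -/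
lemma local_solver {V : EuclideanSpace ℝ (Fin n) → ℝ}
    (hVsmooth : ContDiffOn ℝ (⊤ : ℕ∞) V ({0}ᶜ : Set (EuclideanSpace ℝ (Fin n))))
    (hgrad : ∀ x ≠ (0 : EuclideanSpace ℝ (Fin n)), gradient V x ≠ 0)
    {K : Set (EuclideanSpace ℝ (Fin n))} (hK : IsCompact K) (hK0 : (0:EuclideanSpace ℝ (Fin n)) ∉ K) :
    ∃ δ > (0:ℝ), ∀ y ∈ K, ∀ t₀ : ℝ, ∃ f : ℝ → EuclideanSpace ℝ (Fin n), f t₀ = y ∧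
      ∀ t ∈ Icc (t₀ - δ) (t₀ + δ), f t ≠ 0 ∧
        HasDerivWithinAt f (NF V (f t)) (Icc (t₀ - δ) (t₀ + δ)) t := by
  have hKU : K ⊆ ({0}ᶜ : Set (EuclideanSpace ℝ (Fin n))) := fun y hy hy0 => hK0 (by
    rcases hy0 with rfl; exact hy)
  obtain ⟨r, hr, hrsub⟩ := hK.exists_cthickening_subset_open isOpen_compl_singleton hKU
  set K' := cthickening r K with hK'
  have hK'c : IsCompact K' := hK.cthickening
  have hK'U : ∀ x ∈ K', x ≠ 0 := by
    intro x hx hx0; exact (hrsub hx) (by simpa [hx0] using rfl)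
  have hball : ∀ y ∈ K, closedBall y r ⊆ K' := by
    intro y hy x hx
    exact mem_cthickening_of_dist_le x y r K hy (by simpa [dist_comm] using mem_closedBall.mp hx)
  -- bound on the field
  have hcont : ContinuousOn (NF V) K' := fun x hx =>
    ((contDiffAt_NF hVsmooth hgrad (hK'U x hx)).continuousAt).continuousWithinAt
  obtain ⟨C0, hC0⟩ := hK'c.exists_bound_of_continuousOn hcont
  set C := max C0 1 with hC
  have hCpos : (0:ℝ) < C := lt_of_lt_of_le one_pos (le_max_right _ _)
  -- bound on the derivative of the field
  have hfd : ∀ x ∈ K', ContinuousAt (fderiv ℝ (NF V)) x := by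
    intro x hx
    have h2 := contDiffAt_NF hVsmooth hgrad (hK'U x hx)
    have := h2.fderiv_right (m := 1) (by norm_num)
    exact this.continuousAt
  obtain ⟨L0, hL0⟩ := hK'c.exists_bound_of_continuousOn
    (fun x hx => (hfd x hx).continuousWithinAt)
  set L : ℝ≥0 := L0.toNNReal with hL
  set δ := r / C with hδ
  have hδpos : 0 < δ := div_pos hr hCpos
  refine ⟨δ, hδpos, fun y hy t₀ => ?_⟩
  have hr' : ((r.toNNReal : ℝ≥0) : ℝ) = r := Real.coe_toNNReal _ hr.le
  have hC' : ((C.toNNReal : ℝ≥0) : ℝ) = C := Real.coe_toNNReal _ hCpos.le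
  have ht₀I : t₀ ∈ Icc (t₀ - δ) (t₀ + δ) := by constructor <;> linarith
  have hpl : IsPicardLindelof (fun _ => NF V) (⟨t₀, ht₀I⟩ : Icc (t₀ - δ) (t₀ + δ)) y
      r.toNNReal 0 C.toNNReal L :=
    { lipschitzOnWith := by
        intro t _
        rw [hr']
        apply Convex.lipschitzOnWith_of_nnnorm_fderiv_le (𝕜 := ℝ)
        · intro x hx
          exact ((contDiffAt_NF hVsmooth hgrad
            (hK'U x (hball y hy hx))).of_le one_le_two).differentiableAt one_ne_zero
        · intro x hx
          have := hL0 x (hball y hy hx)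
          calc ‖fderiv ℝ (NF V) x‖₊ = ‖fderiv ℝ (NF V) x‖.toNNReal := norm_toNNReal.symm
            _ ≤ L0.toNNReal := Real.toNNReal_mono this
        · exact convex_closedBall _ _
      continuousOn := fun _ _ => continuousOn_const
      norm_le := fun t _ x hx => by
        rw [hr'] at hx
        rw [hC']
        exact le_trans (hC0 x (hball y hy hx)) (le_max_left _ _)
      mul_max_le := by
        have : max (t₀ + δ - t₀) (t₀ - (t₀ - δ)) = δ := by
          rw [add_sub_cancel_left, sub_sub_cancel, max_self]
        simp only [hC', hr', NNReal.coe_zero, sub_zero, tsub_zero, NNReal.coe_sub, this]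
        rw [hδ, mul_div_cancel₀ _ (ne_of_gt hCpos)] }
  obtain ⟨f, hf0, hf⟩ := my_pl_exists y hpl
  refine ⟨f, hf0, fun t ht => ⟨?_, (hf t ht).2⟩⟩
  have hft : f t ∈ closedBall y r := by simpa only [hr'] using (hf t ht).1
  exact hK'U _ (hball y hy hft)

def IsSol (V : EuclideanSpace ℝ (Fin n) → ℝ) (x₀ : EuclideanSpace ℝ (Fin n))
    (ψ : ℝ → EuclideanSpace ℝ (Fin n)) (p q : ℝ) : Prop :=
  ψ 0 = x₀ ∧ ∀ t ∈ Ioo p q, ψ t ≠ 0 ∧ HasDerivAt ψ (NF V (ψ t)) t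


section Extend

variable {V : EuclideanSpace ℝ (Fin n) → ℝ} {x₀ : EuclideanSpace ℝ (Fin n)} {a b δ : ℝ}

/-- membership of the trajectory in the compact slab -/
lemma traj_mem (hV1 : ContDiff ℝ 1 V)
    (hgrad : ∀ x ≠ (0 : EuclideanSpace ℝ (Fin n)), gradient V x ≠ 0)
    {ψ : ℝ → EuclideanSpace ℝ (Fin n)} {L R : ℝ}
    (hsol : IsSol V x₀ ψ L R) (hL : a ≤ L) (hL0 : L < 0) (hR0 : 0 < R) (hRb : R ≤ b) :
    ∀ t ∈ Ioo L R, V x₀ + a ≤ V (ψ t) ∧ V (ψ t) ≤ V x₀ + b := by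
  intro t ht
  have hv := value_lemma hV1 hgrad hL0 hR0 (fun s hs => (hsol.2 s hs).1)
    (fun s hs => (hsol.2 s hs).2) t ht
  rw [hsol.1] at hv
  constructor <;> rw [hv]
  · have : a < t := lt_of_le_of_lt hL ht.1
    linarith
  · have : t < b := lt_of_lt_of_le ht.2 hRb
    linarith

lemma extend_right (hV1 : ContDiff ℝ 1 V)
    (hVsmooth : ContDiffOn ℝ (⊤ : ℕ∞) V ({0}ᶜ : Set (EuclideanSpace ℝ (Fin n))))
    (hgrad : ∀ x ≠ (0 : EuclideanSpace ℝ (Fin n)), gradient V x ≠ 0)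
    (hδ : 0 < δ)
    (hLS : ∀ y, (V x₀ + a ≤ V y ∧ V y ≤ V x₀ + b) → ∀ t₀ : ℝ,
      ∃ f : ℝ → EuclideanSpace ℝ (Fin n), f t₀ = y ∧
      ∀ t ∈ Icc (t₀ - δ) (t₀ + δ), f t ≠ 0 ∧
        HasDerivWithinAt f (NF V (f t)) (Icc (t₀ - δ) (t₀ + δ)) t)
    {ψ : ℝ → EuclideanSpace ℝ (Fin n)} {L R : ℝ}
    (hsol : IsSol V x₀ ψ L R) (hL : a ≤ L) (hL0 : L < 0) (hR0 : 0 < R) (hRb : R ≤ b) :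
    ∃ ψ', IsSol V x₀ ψ' L (min b (R + δ / 2)) := by
  by_cases hbR : b ≤ R
  · exact ⟨ψ, hsol.1, fun t ht =>
      hsol.2 t ⟨ht.1, lt_of_lt_of_le ht.2 (le_trans (min_le_left _ _) hbR)⟩⟩
  push_neg at hbR
  have hmem := traj_mem (a := a) (b := b) hV1 hgrad hsol hL hL0 hR0 hRb
  set η := min (δ / 4) ((R - L) / 2) with hη
  have hηpos : 0 < η := lt_min (by linarith) (by linarith)
  have hηδ : η ≤ δ / 4 := min_le_left _ _
  have hηRL : η ≤ (R - L) / 2 := min_le_right _ _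
  set t₁ := R - η with ht₁
  have ht₁mem : t₁ ∈ Ioo L R := ⟨by simp only [ht₁]; linarith, by simp only [ht₁]; linarith⟩
  obtain ⟨φ, hφ0, hφ⟩ := hLS (ψ t₁) (hmem t₁ ht₁mem) t₁
  have hφd : ∀ t ∈ Ioo (t₁ - δ) (t₁ + δ), HasDerivAt φ (NF V (φ t)) t := fun t ht =>
    ((hφ t (Ioo_subset_Icc_self ht)).2).hasDerivAt (Icc_mem_nhds ht.1 ht.2)
  set J₁ := max L (t₁ - δ) with hJ₁
  have hRt₁δ : R < t₁ + δ := by simp only [ht₁]; linarith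
  have hEq : EqOn ψ φ (Ioo J₁ R) := by
    have hsub1 : Ioo J₁ R ⊆ Ioo L R := Ioo_subset_Ioo (le_max_left _ _) le_rfl
    have hsub2 : Ioo J₁ R ⊆ Ioo (t₁ - δ) (t₁ + δ) :=
      Ioo_subset_Ioo (le_max_right _ _) hRt₁δ.le
    refine uniq_lemma hVsmooth hgrad (t₀ := t₁)
      ⟨lt_of_le_of_lt (le_refl J₁) ?_, ht₁mem.2⟩
      (fun t ht => (hsol.2 t (hsub1 ht)).1) (fun t ht => (hsol.2 t (hsub1 ht)).2)
      (fun t ht => (hφ t (Ioo_subset_Icc_self (hsub2 ht))).1)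
      (fun t ht => hφd t (hsub2 ht)) hφ0.symm
    exact max_lt ht₁mem.1 (by linarith)
  set N := min b (R + δ / 2) with hN
  have hNt₁δ : N < t₁ + δ := lt_of_le_of_lt (min_le_right _ _) (by simp only [ht₁]; linarith)
  refine ⟨fun t => if t < R then ψ t else φ t, ?_, ?_⟩
  · simp only [if_pos hR0]; exact hsol.1
  intro t ht
  rcases lt_or_ge t t₁ with hlt | hge
  · -- use ψ; note `t < t₁ < R`
    have htLR : t ∈ Ioo L R := ⟨ht.1, lt_trans hlt ht₁mem.2⟩
    have hev : (fun s => if s < R then ψ s else φ s) =ᶠ[𝓝 t] ψ := by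
      filter_upwards [Iio_mem_nhds htLR.2] with s hs
      exact if_pos hs
    have hons : (if t < R then ψ t else φ t) = ψ t := if_pos htLR.2
    constructor
    · show (if t < R then ψ t else φ t) ≠ 0
      rw [hons]; exact (hsol.2 t htLR).1
    · show HasDerivAt (fun s => if s < R then ψ s else φ s)
        (NF V (if t < R then ψ t else φ t)) t
      rw [hons]
      exact ((hsol.2 t htLR).2).congr_of_eventuallyEq hev
  · -- use φ
    have hA : ∀ s ∈ Ioo J₁ (t₁ + δ), (if s < R then ψ s else φ s) = φ s := by
      intro s hs
      by_cases hsR : s < R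
      · rw [if_pos hsR]; exact hEq ⟨hs.1, hsR⟩
      · rw [if_neg hsR]
    have htJ : t ∈ Ioo J₁ (t₁ + δ) :=
      ⟨lt_of_lt_of_le (max_lt ht₁mem.1 (by linarith)) hge, lt_of_lt_of_le ht.2 hNt₁δ.le⟩
    have hev : (fun s => if s < R then ψ s else φ s) =ᶠ[𝓝 t] φ := by
      filter_upwards [Ioo_mem_nhds htJ.1 htJ.2] with s hs using hA s hs
    have hons : (if t < R then ψ t else φ t) = φ t := hA t htJ
    have htd : t ∈ Ioo (t₁ - δ) (t₁ + δ) := ⟨by linarith [hge, hδ], htJ.2⟩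
    constructor
    · show (if t < R then ψ t else φ t) ≠ 0
      rw [hons]; exact (hφ t (Ioo_subset_Icc_self htd)).1
    · show HasDerivAt (fun s => if s < R then ψ s else φ s)
        (NF V (if t < R then ψ t else φ t)) t
      rw [hons]
      exact (hφd t htd).congr_of_eventuallyEq hev

end Extend

lemma extend_left (hV1 : ContDiff ℝ 1 V)
    (hVsmooth : ContDiffOn ℝ (⊤ : ℕ∞) V ({0}ᶜ : Set (EuclideanSpace ℝ (Fin n))))
    (hgrad : ∀ x ≠ (0 : EuclideanSpace ℝ (Fin n)), gradient V x ≠ 0)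
    (hδ : 0 < δ)
    (hLS : ∀ y, (V x₀ + a ≤ V y ∧ V y ≤ V x₀ + b) → ∀ t₀ : ℝ,
      ∃ f : ℝ → EuclideanSpace ℝ (Fin n), f t₀ = y ∧
      ∀ t ∈ Icc (t₀ - δ) (t₀ + δ), f t ≠ 0 ∧
        HasDerivWithinAt f (NF V (f t)) (Icc (t₀ - δ) (t₀ + δ)) t)
    {ψ : ℝ → EuclideanSpace ℝ (Fin n)} {L R : ℝ}
    (hsol : IsSol V x₀ ψ L R) (hL : a ≤ L) (hL0 : L < 0) (hR0 : 0 < R) (hRb : R ≤ b) :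
    ∃ ψ', IsSol V x₀ ψ' (max a (L - δ / 2)) R := by
  by_cases haL : L ≤ a
  · exact ⟨ψ, hsol.1, fun t ht =>
      hsol.2 t ⟨lt_of_le_of_lt (le_trans haL (le_max_left _ _)) ht.1, ht.2⟩⟩
  push_neg at haL
  have hmem := traj_mem (a := a) (b := b) hV1 hgrad hsol hL hL0 hR0 hRb
  set η := min (δ / 4) ((R - L) / 2) with hη
  have hηpos : 0 < η := lt_min (by linarith) (by linarith)
  have hηδ : η ≤ δ / 4 := min_le_left _ _
  have hηRL : η ≤ (R - L) / 2 := min_le_right _ _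
  set t₁ := L + η with ht₁
  have ht₁mem : t₁ ∈ Ioo L R := ⟨by simp only [ht₁]; linarith, by simp only [ht₁]; linarith⟩
  obtain ⟨φ, hφ0, hφ⟩ := hLS (ψ t₁) (hmem t₁ ht₁mem) t₁
  have hφd : ∀ t ∈ Ioo (t₁ - δ) (t₁ + δ), HasDerivAt φ (NF V (φ t)) t := fun t ht =>
    ((hφ t (Ioo_subset_Icc_self ht)).2).hasDerivAt (Icc_mem_nhds ht.1 ht.2)
  set J₂ := min R (t₁ + δ) with hJ₂
  have hLt₁δ : t₁ - δ < L := by simp only [ht₁]; linarith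
  have hEq : EqOn ψ φ (Ioo L J₂) := by
    have hsub1 : Ioo L J₂ ⊆ Ioo L R := Ioo_subset_Ioo le_rfl (min_le_left _ _)
    have hsub2 : Ioo L J₂ ⊆ Ioo (t₁ - δ) (t₁ + δ) :=
      Ioo_subset_Ioo hLt₁δ.le (min_le_right _ _)
    refine uniq_lemma hVsmooth hgrad (t₀ := t₁)
      ⟨ht₁mem.1, lt_min ht₁mem.2 (by linarith)⟩
      (fun t ht => (hsol.2 t (hsub1 ht)).1) (fun t ht => (hsol.2 t (hsub1 ht)).2)
      (fun t ht => (hφ t (Ioo_subset_Icc_self (hsub2 ht))).1)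
      (fun t ht => hφd t (hsub2 ht)) hφ0.symm
  set N := max a (L - δ / 2) with hN
  have hNt₁δ : t₁ - δ < N := lt_of_lt_of_le (by simp only [ht₁]; linarith) (le_max_right _ _)
  refine ⟨fun t => if L < t then ψ t else φ t, ?_, ?_⟩
  · simp only [if_pos hL0]; exact hsol.1
  intro t ht
  rcases lt_or_ge t₁ t with hgt | hle
  · -- use ψ; note `L < t₁ < t`
    have htLR : t ∈ Ioo L R := ⟨lt_trans ht₁mem.1 hgt, ht.2⟩
    have hev : (fun s => if L < s then ψ s else φ s) =ᶠ[𝓝 t] ψ := by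
      filter_upwards [Ioi_mem_nhds htLR.1] with s hs
      exact if_pos hs
    have hons : (if L < t then ψ t else φ t) = ψ t := if_pos htLR.1
    constructor
    · show (if L < t then ψ t else φ t) ≠ 0
      rw [hons]; exact (hsol.2 t htLR).1
    · show HasDerivAt (fun s => if L < s then ψ s else φ s)
        (NF V (if L < t then ψ t else φ t)) t
      rw [hons]
      exact ((hsol.2 t htLR).2).congr_of_eventuallyEq hev
  · -- use φ
    have hA : ∀ s ∈ Ioo (t₁ - δ) J₂, (if L < s then ψ s else φ s) = φ s := by
      intro s hs
      by_cases hsL : L < s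
      · rw [if_pos hsL]; exact hEq ⟨hsL, hs.2⟩
      · rw [if_neg hsL]
    have htJ : t ∈ Ioo (t₁ - δ) J₂ :=
      ⟨lt_of_lt_of_le hNt₁δ ht.1.le, lt_of_le_of_lt hle (lt_min ht₁mem.2 (by linarith))⟩
    have hev : (fun s => if L < s then ψ s else φ s) =ᶠ[𝓝 t] φ := by
      filter_upwards [Ioo_mem_nhds htJ.1 htJ.2] with s hs using hA s hs
    have hons : (if L < t then ψ t else φ t) = φ t := hA t htJ
    have htd : t ∈ Ioo (t₁ - δ) (t₁ + δ) := ⟨htJ.1, lt_of_le_of_lt hle (by linarith)⟩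
    constructor
    · show (if L < t then ψ t else φ t) ≠ 0
      rw [hons]; exact (hφ t (Ioo_subset_Icc_self htd)).1
    · show HasDerivAt (fun s => if L < s then ψ s else φ s)
        (NF V (if L < t then ψ t else φ t)) t
      rw [hons]
      exact (hφd t htd).congr_of_eventuallyEq hev

lemma sol_induct (hV1 : ContDiff ℝ 1 V)
    (hVsmooth : ContDiffOn ℝ (⊤ : ℕ∞) V ({0}ᶜ : Set (EuclideanSpace ℝ (Fin n))))
    (hgrad : ∀ x ≠ (0 : EuclideanSpace ℝ (Fin n)), gradient V x ≠ 0)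
    (hδ : 0 < δ) (ha : a < 0) (hb : 0 < b)
    (hLS : ∀ y, (V x₀ + a ≤ V y ∧ V y ≤ V x₀ + b) → ∀ t₀ : ℝ,
      ∃ f : ℝ → EuclideanSpace ℝ (Fin n), f t₀ = y ∧
      ∀ t ∈ Icc (t₀ - δ) (t₀ + δ), f t ≠ 0 ∧
        HasDerivWithinAt f (NF V (f t)) (Icc (t₀ - δ) (t₀ + δ)) t) :
    ∀ m : ℕ, ∃ ψ, IsSol V x₀ ψ (max a (-(m * (δ / 2)))) (min b (m * (δ / 2))) := by
  intro m
  induction m with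
  | zero =>
    refine ⟨fun _ => x₀, rfl, fun t ht => absurd ht ?_⟩
    intro ht
    have h1 : (0:ℝ) ≤ max a (-((0:ℕ) * (δ / 2))) := by simp
    have h2 : min b (((0:ℕ):ℝ) * (δ / 2)) ≤ 0 := by simp
    have := ht.1; have := ht.2
    push_cast at *
    linarith
  | succ m ih =>
    rcases Nat.eq_zero_or_pos m with rfl | hm
    · -- base: build from the local solver at x₀
      obtain ⟨φ, hφ0, hφ⟩ := hLS x₀ ⟨by linarith, by linarith⟩ 0
      refine ⟨φ, hφ0, fun t ht => ?_⟩
      have h1 : -(δ / 2) ≤ max a (-(((0+1:ℕ):ℝ) * (δ / 2))) := by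
        have := le_max_right a (-(((0+1:ℕ):ℝ) * (δ / 2)))
        push_cast at *
        linarith
      have h2 : min b (((0+1:ℕ):ℝ) * (δ / 2)) ≤ δ / 2 := by
        have := min_le_right b (((0+1:ℕ):ℝ) * (δ / 2))
        push_cast at *
        linarith
      have htd : t ∈ Ioo (0 - δ) (0 + δ) := by
        constructor
        · have := ht.1; linarith [lt_of_le_of_lt h1 ht.1]
        · linarith [lt_of_lt_of_le ht.2 h2]
      exact ⟨(hφ t (Ioo_subset_Icc_self htd)).1,
        ((hφ t (Ioo_subset_Icc_self htd)).2).hasDerivAt (Icc_mem_nhds htd.1 htd.2)⟩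
    · obtain ⟨ψ, hψ⟩ := ih
      have hmpos : (0:ℝ) < (m:ℝ) * (δ / 2) :=
        mul_pos (by exact_mod_cast hm) (by linarith)
      have hL0 : max a (-((m:ℝ) * (δ / 2))) < 0 := max_lt ha (by linarith)
      have hR0 : 0 < min b ((m:ℝ) * (δ / 2)) := lt_min hb hmpos
      obtain ⟨ψ₁, hψ₁⟩ := extend_right hV1 hVsmooth hgrad hδ hLS hψ
        (le_max_left _ _) hL0 hR0 (min_le_left _ _)
      have hN₁0 : 0 < min b (min b ((m:ℝ) * (δ / 2)) + δ / 2) := lt_min hb (by linarith)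
      obtain ⟨ψ₂, hψ₂⟩ := extend_left hV1 hVsmooth hgrad hδ hLS hψ₁
        (le_max_left _ _) hL0 hN₁0 (min_le_left _ _)
      have key1 : max a (-((m:ℝ) * (δ / 2))) - δ / 2 ≤ max a (-((m+1:ℕ) * (δ / 2))) := by
        rcases le_total a (-((m:ℝ) * (δ / 2))) with h | h
        · rw [max_eq_right h]
          have := le_max_right a (-(((m+1:ℕ):ℝ) * (δ / 2)))
          push_cast at *
          linarith
        · rw [max_eq_left h]
          have := le_max_left a (-(((m+1:ℕ):ℝ) * (δ / 2)))
          linarith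
      have key2 : min b (((m+1:ℕ):ℝ) * (δ / 2)) ≤ min b (min b ((m:ℝ) * (δ / 2)) + δ / 2) := by
        refine le_min (min_le_left _ _) ?_
        rcases le_total b ((m:ℝ) * (δ / 2)) with h | h
        · rw [min_eq_left h]
          have := min_le_left b (((m+1:ℕ):ℝ) * (δ / 2))
          linarith
        · rw [min_eq_right h]
          have := min_le_right b (((m+1:ℕ):ℝ) * (δ / 2))
          push_cast at *
          linarith
      refine ⟨ψ₂, hψ₂.1, fun t ht => hψ₂.2 t ⟨?_, ?_⟩⟩
      · refine lt_of_le_of_lt (max_le (le_max_left _ _) key1) ?_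
        exact_mod_cast ht.1
      · refine lt_of_lt_of_le ?_ key2
        exact_mod_cast ht.2

lemma sol_Ioo (hV1 : ContDiff ℝ 1 V)
    (hproper : ∀ β ≥ (0:ℝ), IsCompact {x | V x ≤ β})
    (hV0 : V 0 = 0) (hVpos : ∀ x ≠ (0 : EuclideanSpace ℝ (Fin n)), 0 < V x)
    (hVsmooth : ContDiffOn ℝ (⊤ : ℕ∞) V ({0}ᶜ : Set (EuclideanSpace ℝ (Fin n))))
    (hgrad : ∀ x ≠ (0 : EuclideanSpace ℝ (Fin n)), gradient V x ≠ 0)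
    (hx₀ : x₀ ≠ 0)
    (hca : -(V x₀) < a) (ha : a < 0) (hb : 0 < b) :
    ∃ ψ, IsSol V x₀ ψ a b := by
  have hc : 0 < V x₀ := hVpos x₀ hx₀
  set K : Set (EuclideanSpace ℝ (Fin n)) := {y | V x₀ + a ≤ V y ∧ V y ≤ V x₀ + b} with hK
  have hKcl : IsClosed K := by
    have h1 : IsClosed {y : EuclideanSpace ℝ (Fin n) | V x₀ + a ≤ V y} :=
      isClosed_le continuous_const (hV1.continuous)
    have h2 : IsClosed {y : EuclideanSpace ℝ (Fin n) | V y ≤ V x₀ + b} :=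
      isClosed_le (hV1.continuous) continuous_const
    exact h1.inter h2
  have hKc : IsCompact K := by
    refine (hproper (V x₀ + b) (by linarith)).of_isClosed_subset hKcl fun y hy => hy.2
  have hK0 : (0:EuclideanSpace ℝ (Fin n)) ∉ K := by
    intro h0
    have := h0.1
    rw [hV0] at this
    linarith
  obtain ⟨δ, hδ, hLS'⟩ := local_solver hVsmooth hgrad hKc hK0
  have hLS : ∀ y, (V x₀ + a ≤ V y ∧ V y ≤ V x₀ + b) → ∀ t₀ : ℝ,
      ∃ f : ℝ → EuclideanSpace ℝ (Fin n), f t₀ = y ∧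
      ∀ t ∈ Icc (t₀ - δ) (t₀ + δ), f t ≠ 0 ∧
        HasDerivWithinAt f (NF V (f t)) (Icc (t₀ - δ) (t₀ + δ)) t :=
    fun y hy => hLS' y hy
  obtain ⟨m, hm⟩ := exists_nat_gt (2 * max (-a) b / δ)
  have hm' : max (-a) b < (m:ℝ) * (δ / 2) := by
    rw [div_lt_iff₀ hδ] at hm
    linarith
  have hma : -((m:ℝ) * (δ / 2)) ≤ a := by
    have := le_max_left (-a) b
    linarith
  have hmb : b ≤ (m:ℝ) * (δ / 2) := le_of_lt (lt_of_le_of_lt (le_max_right (-a) b) hm')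
  obtain ⟨ψ, hψ⟩ := sol_induct hV1 hVsmooth hgrad hδ ha hb hLS m
  rw [max_eq_left hma, min_eq_left hmb] at hψ
  exact ⟨ψ, hψ⟩

lemma global_sol (hV1 : ContDiff ℝ 1 V)
    (hproper : ∀ β ≥ (0:ℝ), IsCompact {x | V x ≤ β})
    (hV0 : V 0 = 0) (hVpos : ∀ x ≠ (0 : EuclideanSpace ℝ (Fin n)), 0 < V x)
    (hVsmooth : ContDiffOn ℝ (⊤ : ℕ∞) V ({0}ᶜ : Set (EuclideanSpace ℝ (Fin n))))
    (hgrad : ∀ x ≠ (0 : EuclideanSpace ℝ (Fin n)), gradient V x ≠ 0)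
    (hx₀ : x₀ ≠ 0) :
    ∃ ψ : ℝ → EuclideanSpace ℝ (Fin n), ψ 0 = x₀ ∧
      ∀ t ∈ Ioi (-(V x₀)), ψ t ≠ 0 ∧ HasDerivAt ψ (NF V (ψ t)) t ∧ V (ψ t) = V x₀ + t := by
  have hc : 0 < V x₀ := hVpos x₀ hx₀
  set c := V x₀ with hcdef
  set A : ℕ → ℝ := fun k => -c + c / (k + 2) with hA
  set B : ℕ → ℝ := fun k => (k : ℝ) + 1 with hB
  have hAmem : ∀ k, -c < A k ∧ A k < 0 := by
    intro k
    have hk2 : (0:ℝ) < (k:ℝ) + 2 := by positivity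
    constructor
    · simp only [hA]; have : 0 < c / ((k:ℝ) + 2) := by positivity
      linarith
    · simp only [hA]
      have : c / ((k:ℝ) + 2) < c := div_lt_self hc (by linarith)
      linarith
  have hBpos : ∀ k, (0:ℝ) < B k := fun k => by simp only [hB]; positivity
  have hex : ∀ k : ℕ, ∃ ψ, IsSol V x₀ ψ (A k) (B k) := fun k =>
    sol_Ioo hV1 hproper hV0 hVpos hVsmooth hgrad hx₀ (hAmem k).1 (hAmem k).2 (hBpos k)
  choose Φ hΦ using hex
  have h0mem : ∀ k, (0:ℝ) ∈ Ioo (A k) (B k) := fun k => ⟨(hAmem k).2, hBpos k⟩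
  -- agreement of any two local solutions
  have hagree : ∀ j k s, s ∈ Ioo (A j) (B j) → s ∈ Ioo (A k) (B k) → Φ j s = Φ k s := by
    intro j k s hsj hsk
    have hsub_j : Ioo (max (A j) (A k)) (min (B j) (B k)) ⊆ Ioo (A j) (B j) :=
      Ioo_subset_Ioo (le_max_left _ _) (min_le_left _ _)
    have hsub_k : Ioo (max (A j) (A k)) (min (B j) (B k)) ⊆ Ioo (A k) (B k) :=
      Ioo_subset_Ioo (le_max_right _ _) (min_le_right _ _)
    have h0 : (0:ℝ) ∈ Ioo (max (A j) (A k)) (min (B j) (B k)) :=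
      ⟨max_lt (h0mem j).1 (h0mem k).1, lt_min (h0mem j).2 (h0mem k).2⟩
    have := uniq_lemma hVsmooth hgrad h0
      (fun t ht => ((hΦ j).2 t (hsub_j ht)).1) (fun t ht => ((hΦ j).2 t (hsub_j ht)).2)
      (fun t ht => ((hΦ k).2 t (hsub_k ht)).1) (fun t ht => ((hΦ k).2 t (hsub_k ht)).2)
      ((hΦ j).1.trans (hΦ k).1.symm)
    exact this ⟨max_lt hsj.1 hsk.1, lt_min hsj.2 hsk.2⟩
  classical
  set Ψ : ℝ → EuclideanSpace ℝ (Fin n) := fun t =>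
    if h : ∃ k, t ∈ Ioo (A k) (B k) then Φ (Nat.find h) t else x₀ with hΨ
  have hΨeq : ∀ k, EqOn Ψ (Φ k) (Ioo (A k) (B k)) := by
    intro k s hs
    have hh : ∃ j, s ∈ Ioo (A j) (B j) := ⟨k, hs⟩
    simp only [hΨ, dif_pos hh]
    exact hagree _ k s (Nat.find_spec hh) hs
  have hΨ0 : Ψ 0 = x₀ := by
    rw [hΨeq 0 (h0mem 0)]
    exact (hΦ 0).1
  refine ⟨Ψ, hΨ0, fun t ht => ?_⟩
  -- cover: find `k` with `t ∈ Ioo (A k) (B k)`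
  have htc : -c < t := ht
  have htc' : 0 < t + c := by linarith
  obtain ⟨k, hk⟩ := exists_nat_gt (max (c / (t + c)) t)
  have hk1 : c / (t + c) < (k:ℝ) := lt_of_le_of_lt (le_max_left _ _) hk
  have hk2 : t < (k:ℝ) := lt_of_le_of_lt (le_max_right _ _) hk
  have htmem : t ∈ Ioo (A k) (B k) := by
    constructor
    · simp only [hA]
      have hkpos : (0:ℝ) < (k:ℝ) + 2 := by positivity
      have : c < (t + c) * ((k:ℝ) + 2) := by
        have h1 : c ≤ (t + c) * (c / (t + c)) := by
          rw [mul_div_cancel₀ _ (ne_of_gt htc')]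
        calc c = (t + c) * (c / (t + c)) := by rw [mul_div_cancel₀ _ (ne_of_gt htc')]
          _ < (t + c) * ((k:ℝ) + 2) := by
              apply mul_lt_mul_of_pos_left _ htc'
              linarith
      have : c / ((k:ℝ) + 2) < t + c := (div_lt_iff₀ hkpos).mpr (by linarith [this])
      linarith
    · simp only [hB]; linarith
  have hval : V (Ψ t) = c + t := by
    have := value_lemma hV1 hgrad (hAmem k).2 (hBpos k)
      (fun s hs => ((hΦ k).2 s hs).1) (fun s hs => ((hΦ k).2 s hs).2) t htmem
    rw [(hΦ k).1] at this
    rw [hΨeq k htmem]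
    exact this
  refine ⟨?_, ?_, hval⟩
  · rw [hΨeq k htmem]
    exact ((hΦ k).2 t htmem).1
  · have hev : Ψ =ᶠ[𝓝 t] Φ k := by
      filter_upwards [Ioo_mem_nhds htmem.1 htmem.2] with s hs using hΨeq k hs
    have := ((hΦ k).2 t htmem).2.congr_of_eventuallyEq hev
    rwa [hΨeq k htmem]


open Set

/-- along the normalized gradient flow
`ẋ = ∇V(x)/‖∇V(x)‖²` of a proper, positive definite `C¹` Lyapunov function `V`
(smooth with nonvanishing gradient away from `0`), one has
`V(ψ(t,x)) = V(x) + t`, and for `x ≠ 0` the solution exists for all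
`t ∈ (−V(x), ∞)`. -/
theorem normalized_gradient_flow
    (n : ℕ) (V : EuclideanSpace ℝ (Fin n) → ℝ)
    (hV1 : ContDiff ℝ 1 V)
    (hproper : ∀ β ≥ (0:ℝ), IsCompact {x | V x ≤ β})
    (hV0 : V 0 = 0) (hVpos : ∀ x ≠ (0 : EuclideanSpace ℝ (Fin n)), 0 < V x)
    (hVsmooth : ContDiffOn ℝ (⊤ : ℕ∞) V ({0}ᶜ : Set (EuclideanSpace ℝ (Fin n))))
    (hgrad : ∀ x ≠ (0 : EuclideanSpace ℝ (Fin n)), gradient V x ≠ 0)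
    (x₀ : EuclideanSpace ℝ (Fin n)) (hx₀ : x₀ ≠ 0) :
    -- any solution satisfies V(ψ(t)) = V(x₀) + t on its interval of definition
    (∀ (ψ : ℝ → EuclideanSpace ℝ (Fin n)) (a b : ℝ), a < 0 → 0 < b →
      ψ 0 = x₀ → (∀ t ∈ Ioo a b, ψ t ≠ 0) →
      (∀ t ∈ Ioo a b, HasDerivAt ψ
        ((‖gradient V (ψ t)‖ ^ 2)⁻¹ • gradient V (ψ t)) t) →
      ∀ t ∈ Ioo a b, V (ψ t) = V x₀ + t) ∧
    -- existence of a solution on all of (−V(x₀), ∞)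
    (∃ ψ : ℝ → EuclideanSpace ℝ (Fin n), ψ 0 = x₀ ∧
      ∀ t ∈ Ioi (-(V x₀)), ψ t ≠ 0 ∧
        HasDerivAt ψ ((‖gradient V (ψ t)‖ ^ 2)⁻¹ • gradient V (ψ t)) t ∧
        V (ψ t) = V x₀ + t) := by
  constructor
  · intro ψ a b ha hb hψ0 hne hd t ht
    have hd' : ∀ s ∈ Ioo a b, HasDerivAt ψ (NF V (ψ s)) s := hd
    have := value_lemma hV1 hgrad ha hb hne hd' t ht
    rwa [hψ0] at this
  · obtain ⟨ψ, hψ0, hψ⟩ := global_sol hV1 hproper hV0 hVpos hVsmooth hgrad hx₀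
    exact ⟨ψ, hψ0, fun t ht => ⟨(hψ t ht).1, (hψ t ht).2.1, (hψ t ht).2.2⟩⟩
end
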